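/- arXiv:1302.6954 — 3 statements merged into one kernel-verified Lean document; each statement's English description precedes it below -/
import Mathlib

section
/- Let f : 𝕋¹ → 𝕋¹ be an orientation-preserving homeomorphism with lift f̃ : ℝ → ℝ whose rotation number ρ = ρ(f̃) is irrational. Then f is semiconjugate to the rigid rotation R_ρ : x ↦ x + ρ (mod ℤ): there exists a continuous surjection h : 𝕋¹ → 𝕋¹ such that h ∘ f = R_ρ ∘ h. -/
open Filter Topology Set Function

noncomputable section

/-- The circle 𝕋¹ = ℝ/ℤ. -/
abbrev T1 : Type := AddCircle (1 : ℝ)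

/-- The canonical projection π : ℝ → 𝕋¹. -/
def projC : ℝ → T1 := fun x => (x : T1)

/-- `F` is a lift of the orientation-preserving circle homeomorphism `f`. -/
def IsCircleLift (f : T1 → T1) (F : ℝ → ℝ) : Prop :=
  StrictMono F ∧ (∀ x : ℝ, F (x + 1) = F x + 1) ∧ ∀ x : ℝ, projC (F x) = f (projC x)

/-! Because `F` is bijective with translation number `ρ`, the theory of translation numbers
gives a degree-one lift `H` with `H ∘ F = (ρ + ·) ∘ H`. The range of `H` is then invariant under
translation by `ℤ + ρℤ`, which is dense since `ρ` is irrational; a monotone map with dense range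
is continuous, hence surjective (being of degree one), and `H` descends to the circle. -/

open scoped Pointwise

theorem CircleDeg1Lift.translationNumber_eq_of_tendsto (f : CircleDeg1Lift) {ρ : ℝ} (x : ℝ)
    (h : Tendsto (fun n : ℕ => (f^[n] x - x) / n) atTop (𝓝 ρ)) :
    f.translationNumber = ρ :=
  tendsto_nhds_unique (by simpa only [CircleDeg1Lift.coe_pow] using f.tendsto_translationNumber x) h

theorem mem_stabilizer_range_of_forall_apply_eq_add {α β : Type*} [AddGroup α] {H : β → α}
    {e : β ≃ β} {a : α} (h : ∀ x, H (e x) = a + H x) : a ∈ AddAction.stabilizer α (range H) := by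
  refine AddAction.mem_stabilizer_set.2 fun b => ⟨?_, ?_⟩
  · rintro ⟨x, hx⟩
    refine ⟨e.symm x, add_left_cancel (a := a) ?_⟩
    rw [← h, e.apply_symm_apply, hx, vadd_eq_add]
  · rintro ⟨x, rfl⟩
    exact ⟨e x, h x⟩

theorem Dense.of_le_stabilizer {G : Type*} [AddGroup G] [TopologicalSpace G] [ContinuousAdd G]
    {s : Set G} (hs : s.Nonempty) {S : AddSubgroup G} (hS : Dense (S : Set G))
    (hle : S ≤ AddAction.stabilizer G s) : Dense s := by
  obtain ⟨x, hx⟩ := hs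
  let e := Homeomorph.addRight x
  refine (e.surjective.denseRange.dense_image e.continuous hS).mono ?_
  rintro _ ⟨g, hg, rfl⟩
  exact (AddAction.mem_stabilizer_set.1 (hle hg) x).2 hx

theorem CircleDeg1Lift.denseRange_of_semiconj_translate (H : CircleDeg1Lift) {F : ℝ ≃ ℝ} {ρ : ℝ}
    (hH : ∀ x, H (F x) = ρ + H x) (hρ : Irrational ρ) : DenseRange H := by
  refine Dense.of_le_stabilizer (range_nonempty H) (S := AddSubgroup.closure {1, ρ})
    (dense_addSubgroupClosure_pair_iff.2 (by simpa using hρ.inv)) ?_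
  rw [AddSubgroup.closure_le, pair_subset_iff]
  exact ⟨mem_stabilizer_range_of_forall_apply_eq_add (e := Equiv.addRight 1)
    fun x => (H.map_add_one x).trans (add_comm _ _), mem_stabilizer_range_of_forall_apply_eq_add hH⟩

namespace CircleDeg1Lift

def descend (H : CircleDeg1Lift) : T1 → T1 :=
  Quotient.map' H fun a b hab => by
    rw [QuotientAddGroup.leftRel_apply, AddSubgroup.mem_zmultiples_iff] at hab ⊢
    obtain ⟨n, hn⟩ := hab
    rw [zsmul_one] at hn
    have hb : b = a + n := (eq_neg_add_iff_add_eq.1 hn).symm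
    rw [hb, H.map_add_int]
    exact ⟨n, by simp⟩

theorem descend_coe (H : CircleDeg1Lift) (x : ℝ) : H.descend x = (H x : T1) := rfl

theorem continuous_descend {H : CircleDeg1Lift} (hH : Continuous H) : Continuous H.descend :=
  hH.quotient_map' _

theorem surjective_descend {H : CircleDeg1Lift} (hH : Surjective H) : Surjective H.descend := by
  intro z
  obtain ⟨y, rfl⟩ := QuotientAddGroup.mk_surjective z
  obtain ⟨x, rfl⟩ := hH y
  exact ⟨x, rfl⟩

end CircleDeg1Lift

/-- **Poincaré's semiconjugacy theorem.**  If the rotation number `ρ` of an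
orientation-preserving circle homeomorphism is irrational, then `f` is semiconjugate
to the rigid rotation `R_ρ : x ↦ x + ρ (mod ℤ)`. -/
theorem irrational_rotation_number_semiconjugacy
    (f : T1 ≃ₜ T1) (F : ℝ ≃ₜ ℝ) (hF : IsCircleLift ⇑f ⇑F) (ρ : ℝ)
    (hρ : ∀ x : ℝ, Tendsto (fun n : ℕ => ((⇑F)^[n] x - x) / (n : ℝ)) atTop (𝓝 ρ))
    (hirr : Irrational ρ) :
    ∃ h : T1 → T1, Continuous h ∧ Function.Surjective h ∧
      ∀ z : T1, h (f z) = h z + (ρ : T1) := by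
  obtain ⟨hmono, hadd, hproj⟩ := hF
  let F' : CircleDeg1Lift := ⟨⟨F, hmono.monotone⟩, hadd⟩
  have hτ : F'.translationNumber = ρ := F'.translationNumber_eq_of_tendsto 0 (hρ 0)
  obtain ⟨H, hH⟩ := CircleDeg1Lift.semiconj_of_isUnit_of_translationNumber_eq (f₁ := F')
    (CircleDeg1Lift.isUnit_iff_bijective.2 F.bijective) (Units.isUnit _)
    (hτ.trans (CircleDeg1Lift.translationNumber_translate ρ).symm)
  have hHF : ∀ x, H (F x) = ρ + H x := hH
  have hcont : Continuous H := H.monotone.continuous_of_denseRange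
    (H.denseRange_of_semiconj_translate (F := F.toEquiv) hHF hirr)
  refine ⟨H.descend, CircleDeg1Lift.continuous_descend hcont,
    CircleDeg1Lift.surjective_descend (H.continuous_iff_surjective.1 hcont), ?_⟩
  intro z
  obtain ⟨x, rfl⟩ := QuotientAddGroup.mk_surjective z
  have hfx : f x = (F x : T1) := (hproj x).symm
  rw [hfx, H.descend_coe, H.descend_coe, hHF, AddCircle.coe_add, add_comm]
end
end

section
/- Let f : 𝕋² → 𝕋² be a minimal homeomorphism homotopic to the identity which is a pseudo-rotation with totally irrational rotation vector ρ = (ρ₁, ρ₂) ∈ ℝ² and which has the bounded mean motion property. Then f is semiconjugate to the rigid rotation R_ρ : 𝕋² → 𝕋²: there is a continuous surjection h : 𝕋² → 𝕋² with h ∘ f = R_ρ ∘ h. -/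
/-!
The displacement `φ (π x) = F x - x - ρ` is a continuous function on `𝕋²` whose Birkhoff sums
`F^[n] x - x - n • ρ` are bounded by the bounded mean motion property. By the Gottschalk–Hedlund
theorem for the minimal homeomorphism `f` it is a continuous coboundary, `φ = u ∘ f - u`, and then
`h z = z - π (u z)` satisfies `h ∘ f = R_ρ ∘ h`. The range of `h` is closed and invariant under
translation by `π ρ`, hence all of `𝕋²`, because the multiples of `π ρ` are dense (Kronecker).

Gottschalk–Hedlund: the orbit closure of `(z₀, 0)` under the skew product
`(z, v) ↦ (f z, v + φ z)` is compact, so it contains a minimal compact invariant set `M`. If `M`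
met a fibre at `v` and at `w`, minimality would make it invariant under the fibre translation by
`v - w`, which is impossible for a bounded set. So `M` meets each fibre at most once, and by
minimality of `f` it is the graph of a continuous `u` over all of `𝕋²`.

Kronecker: a closed subgroup of `𝕋²` projecting onto the first circle is either `𝕋²`, or its
vertical fibre is finite of some order `k`; then `(x, y) ↦ (x, k • y)` maps it onto the graph of a
continuous endomorphism `x ↦ m • x` of the circle, and `k ρ₂ - m ρ₁ ∈ ℤ` contradicts total
irrationality.
-/

open Filter Topology Set Function

noncomputable section

/-- The torus 𝕋² = ℝ²/ℤ². -/
abbrev T2 : Type := AddCircle (1 : ℝ) × AddCircle (1 : ℝ)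

/-- The canonical projection π : ℝ² → 𝕋². -/
def proj : ℝ × ℝ → T2 := fun p => ((p.1 : AddCircle (1 : ℝ)), (p.2 : AddCircle (1 : ℝ)))

/-- `F` is a lift of `f`: it projects to `f` and commutes with integer translations. -/
def IsLift (f : T2 → T2) (F : ℝ × ℝ → ℝ × ℝ) : Prop :=
  (∀ x, proj (F x) = f (proj x)) ∧
    ∀ (x : ℝ × ℝ) (v : ℤ × ℤ),
      F (x + ((v.1 : ℝ), (v.2 : ℝ))) = F x + ((v.1 : ℝ), (v.2 : ℝ))

/-- Integer iterates of a homeomorphism. -/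
def hIter {X : Type*} [TopologicalSpace X] (f : X ≃ₜ X) : ℤ → X → X
  | Int.ofNat n => (⇑f)^[n]
  | Int.negSucc n => (⇑f.symm)^[n + 1]

/-- `f` is a pseudo-rotation with rotation vector `ρ`, witnessed by the lift `F`. -/
def IsPseudoRotation (F : ℝ × ℝ → ℝ × ℝ) (ρ : ℝ × ℝ) : Prop :=
  ∀ x : ℝ × ℝ, Tendsto (fun n : ℕ => ((n : ℝ))⁻¹ • (F^[n] x - x)) atTop (𝓝 ρ)

/-- The bounded mean motion property for the lift `F` with rotation vector `ρ`. -/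
def BoundedMeanMotion (F : (ℝ × ℝ) ≃ₜ (ℝ × ℝ)) (ρ : ℝ × ℝ) : Prop :=
  ∃ C : ℝ, ∀ (x : ℝ × ℝ) (n : ℤ), ‖hIter F n x - x - (n : ℝ) • ρ‖ ≤ C

/-- `ρ = (ρ₁, ρ₂)` is totally irrational: `1, ρ₁, ρ₂` are linearly independent over ℚ. -/
def TotallyIrrational (ρ : ℝ × ℝ) : Prop :=
  ∀ q₀ q₁ q₂ : ℚ, (q₀ : ℝ) + (q₁ : ℝ) * ρ.1 + (q₂ : ℝ) * ρ.2 = 0 → q₀ = 0 ∧ q₁ = 0 ∧ q₂ = 0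

/-- The rigid rotation `R_ρ` of the torus. -/
def Rrot (ρ : ℝ × ℝ) : T2 → T2 :=
  fun z => (z.1 + (ρ.1 : AddCircle (1 : ℝ)), z.2 + (ρ.2 : AddCircle (1 : ℝ)))


section Compact

variable {X Y : Type*} [TopologicalSpace X] [TopologicalSpace Y] [T2Space X]

theorem IsCompact.exists_continuous_graph_subset {S : Set (X × Y)}
    (hS : IsCompact S) (hS_graph : ∀ x, ∃! y, (x, y) ∈ S) :
    ∃ g : X → Y, Continuous g ∧ ∀ x, (x, g x) ∈ S := by
  choose g hgS hg_unique using hS_graph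
  refine ⟨g, continuous_iff_isClosed.2 fun C hC ↦ ?_, hgS⟩
  have hpre : g ⁻¹' C = Prod.fst '' (S ∩ univ ×ˢ C) := by
    ext x
    refine ⟨fun hx ↦ ⟨(x, g x), ⟨hgS x, trivial, hx⟩, rfl⟩, ?_⟩
    rintro ⟨⟨x, y⟩, ⟨hxy, -, hy⟩, rfl⟩
    rwa [mem_preimage, ← hg_unique x y hxy]
  rw [hpre]
  exact ((hS.inter_right (isClosed_univ.prod hC)).image continuous_fst).isClosed

omit [TopologicalSpace Y] in
theorem IsCompact.exists_minimal_mapsTo {g : X → X} {K : Set X}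
    (hK : IsCompact K) (hne : K.Nonempty) (hg : MapsTo g K K) :
    ∃ M ⊆ K, Minimal (fun M ↦ M.Nonempty ∧ IsCompact M ∧ MapsTo g M M) M := by
  refine zorn_superset_nonempty _ (fun c hc hchain hcne ↦ ?_) K ⟨hne, hK, hg⟩
  have : Nonempty c := hcne.to_subtype
  refine ⟨⋂₀ c, ⟨?_, ?_, ?_⟩, fun s hs ↦ sInter_subset_of_mem hs⟩
  · exact IsCompact.nonempty_sInter_of_directed_nonempty_isCompact_isClosed
      (IsChain.directedOn hchain.symm) (fun s hs ↦ (hc hs).1) (fun s hs ↦ (hc hs).2.1)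
      fun s hs ↦ (hc hs).2.1.isClosed
  · obtain ⟨s, hs⟩ := hcne
    exact (hc hs).2.1.of_isClosed_subset (isClosed_sInter fun t ht ↦ (hc ht).2.1.isClosed)
      (sInter_subset_of_mem hs)
  · exact fun x hx ↦ mem_sInter.2 fun s hs ↦ (hc hs).2.2 (mem_sInter.1 hx s hs)

end Compact

theorem eq_zero_of_forall_add_nsmul_mem {E : Type*} [NormedAddCommGroup E] [NormedSpace ℝ E]
    {S : Set E} (hS : Bornology.IsBounded S) {v w : E} (h : ∀ n : ℕ, v + n • w ∈ S) : w = 0 := by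
  obtain ⟨C, hC⟩ := isBounded_iff_forall_norm_le.1 hS
  have hbound : ∀ n : ℕ, n * ‖w‖ ≤ C + ‖v‖ := fun n ↦ calc
    n * ‖w‖ = ‖n • w‖ := by rw [← Nat.cast_smul_eq_nsmul ℝ, norm_smul, Real.norm_natCast]
    _ ≤ ‖v + n • w‖ + ‖v‖ := by simpa using norm_sub_le (v + n • w) v
    _ ≤ C + ‖v‖ := by gcongr; exact hC _ (h n)
  refine norm_eq_zero.1 (le_antisymm ?_ (norm_nonneg w))
  by_contra! hw
  obtain ⟨n, hn⟩ := exists_nat_gt ((C + ‖v‖) / ‖w‖)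
  rw [div_lt_iff₀ hw] at hn
  linarith [hbound n]

open scoped Pointwise in
theorem eq_univ_of_vadd_eq_of_dense_zmultiples {G : Type*} [TopologicalSpace G] [AddGroup G]
    [IsTopologicalAddGroup G] {a : G} (ha : Dense (AddSubgroup.zmultiples a : Set G))
    {S : Set G} (hS : IsClosed S) (hne : S.Nonempty) (haS : (a + ·) '' S = S) : S = univ := by
  obtain ⟨s, hs⟩ := hne
  have hstab : AddSubgroup.zmultiples a ≤ AddAction.stabilizer G S :=
    AddSubgroup.zmultiples_le_of_mem (AddAction.mem_stabilizer_iff.2 (by rwa [← image_vadd]))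
  have hsub : (· + s) '' (AddSubgroup.zmultiples a : Set G) ⊆ S := by
    rintro _ ⟨g, hg, rfl⟩
    exact AddAction.mem_stabilizer_iff.1 (hstab hg) ▸ vadd_mem_vadd_set hs
  exact eq_univ_of_univ_subset <|
    ((Homeomorph.addRight s).isDenseEmbedding.dense_image.2 ha).closure_eq ▸
      hS.closure_subset_iff.2 hsub

namespace AddCircle

theorem exists_coe_mul_of_continuous_addMonoidHom {p : ℝ} (ψ : ℝ →+ AddCircle p)
    (hψ : Continuous ψ) : ∃ c : ℝ, ∀ x, ψ x = ((c * x : ℝ) : AddCircle p) := by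
  obtain ⟨Ψ, ⟨hΨ0, hΨ⟩, hΨ_unique⟩ :=
    (isCoveringMap_coe p).existsUnique_continuousMap_lifts ⟨ψ, hψ⟩ 0 0 (by simp)
  have hΨ_apply : ∀ x, ((Ψ x : ℝ) : AddCircle p) = ψ x := congr_fun hΨ
  -- `x ↦ Ψ (x + y) - Ψ y` is another lift of `ψ` vanishing at `0`.
  have hΨ_add : ∀ x y, Ψ (x + y) = Ψ x + Ψ y := by
    intro x y
    let Ψ' : C(ℝ, ℝ) := ⟨fun x ↦ Ψ (x + y) - Ψ y, by fun_prop⟩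
    have hΨ' : Ψ' = Ψ := hΨ_unique Ψ' ⟨by simp [Ψ'], funext fun x ↦ by
      simp [Ψ', hΨ_apply, map_add]⟩
    have := congr($hΨ' x)
    simp only [Ψ', ContinuousMap.coe_mk] at this
    linarith
  refine ⟨Ψ 1, fun x ↦ ?_⟩
  have hΨ_mul := map_real_smul (AddMonoidHom.mk' Ψ hΨ_add) Ψ.continuous x 1
  simp only [smul_eq_mul, mul_one, AddMonoidHom.mk'_apply] at hΨ_mul
  rw [← hΨ_apply, hΨ_mul, mul_comm]

theorem exists_zsmul_of_continuous_addMonoidHom {p : ℝ} (hp : p ≠ 0)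
    (φ : AddCircle p →+ AddCircle p) (hφ : Continuous φ) : ∃ m : ℤ, ∀ x, φ x = m • x := by
  obtain ⟨c, hc⟩ := exists_coe_mul_of_continuous_addMonoidHom
    (φ.comp (QuotientAddGroup.mk' _)) (hφ.comp continuous_quotient_mk')
  obtain ⟨m, hm⟩ : ∃ m : ℤ, m • p = c * p := by
    rw [← coe_eq_zero_iff, ← hc]
    simp [coe_period]
  have hcm : c = m := by
    rw [zsmul_eq_mul] at hm
    exact (mul_right_cancel₀ hp hm).symm
  refine ⟨m, fun x ↦ ?_⟩
  induction x using QuotientAddGroup.induction_on with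
  | H x =>
    rw [← coe_zsmul, zsmul_eq_mul, ← hcm, ← hc]
    rfl

theorem eq_top_or_exists_nsmul_snd_eq_zsmul_fst {p : ℝ} [Fact (0 < p)]
    {H : AddSubgroup (AddCircle p × AddCircle p)}
    (hH : IsClosed (H : Set (AddCircle p × AddCircle p)))
    (hfst : Prod.fst '' (H : Set (AddCircle p × AddCircle p)) = univ) :
    H = ⊤ ∨ ∃ k : ℕ, k ≠ 0 ∧ ∃ m : ℤ, ∀ z ∈ H, k • z.2 = m • z.1 := by
  have hfiber : ∀ x, ∃ y, (x, y) ∈ H := fun x ↦ by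
    obtain ⟨⟨x, y⟩, hy, rfl⟩ := hfst.symm ▸ mem_univ x
    exact ⟨y, hy⟩
  have hsub : ∀ {x y y'}, (x, y) ∈ H → (x, y') ∈ H → ((0 : AddCircle p), y - y') ∈ H :=
    fun h h' ↦ by simpa using H.sub_mem h h'
  let K : AddSubgroup (AddCircle p) := H.comap (AddMonoidHom.inr _ _)
  by_cases hK : Dense (K : Set (AddCircle p))
  · left
    have hK_top : ∀ y, ((0 : AddCircle p), y) ∈ H := fun y ↦
      (hH.preimage (continuous_const.prodMk continuous_id)).closure_subset (hK y)
    refine eq_top_iff.2 fun ⟨x, y⟩ _ ↦ ?_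
    obtain ⟨y', hy'⟩ := hfiber x
    simpa using H.add_mem hy' (hK_top (y - y'))
  right
  obtain ⟨a, ha, hKa⟩ : ∃ a : AddCircle p, addOrderOf a ≠ 0 ∧ K = .zmultiples a := by
    simpa [AddCircle.dense_addSubgroup_iff_ne_zmultiples] using hK
  set k := addOrderOf a
  have hk : ∀ y, ((0 : AddCircle p), y) ∈ H → k • y = 0 := fun y hy ↦ by
    have hyK : y ∈ AddSubgroup.zmultiples a := hKa ▸ hy
    obtain ⟨n, rfl⟩ := AddSubgroup.mem_zmultiples_iff.1 hyK
    rw [smul_comm, addOrderOf_nsmul_eq_zero, zsmul_zero]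
  -- The image of `H` under `(x, y) ↦ (x, k • y)` is the graph of a continuous endomorphism.
  let L : AddCircle p × AddCircle p →+ AddCircle p × AddCircle p :=
    (AddMonoidHom.fst _ _).prod (k • AddMonoidHom.snd _ _)
  have hL : Continuous L := continuous_fst.prodMk (continuous_snd.nsmul k)
  have hgraph : ∀ x, ∃! y, (x, y) ∈ H.map L := fun x ↦ by
    obtain ⟨y, hy⟩ := hfiber x
    refine ⟨k • y, ⟨_, hy, rfl⟩, ?_⟩
    rintro _ ⟨⟨x', y'⟩, hy', hL'⟩
    simp only [L, AddMonoidHom.prod_apply, Prod.mk.injEq] at hL'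
    obtain ⟨rfl, rfl⟩ := hL'
    simpa [sub_eq_zero, nsmul_sub] using hk _ (hsub hy' hy)
  obtain ⟨g, hg, hgL⟩ := (hH.isCompact.image hL).exists_continuous_graph_subset hgraph
  have hg_add : ∀ x x', g (x + x') = g x + g x' := fun x x' ↦
    (hgraph _).unique (hgL _) (by simpa using (H.map L).add_mem (hgL x) (hgL x'))
  obtain ⟨m, hm⟩ := exists_zsmul_of_continuous_addMonoidHom (Fact.out : 0 < p).ne'
    (AddMonoidHom.mk' g hg_add) hg
  refine ⟨k, ha, m, fun z hz ↦ ?_⟩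
  rw [← hm z.1]
  exact (hgraph z.1).unique ⟨z, hz, rfl⟩ (hgL z.1)

end AddCircle

theorem isQuotientMap_proj : IsQuotientMap proj :=
  (QuotientAddGroup.isOpenQuotientMap_mk.prodMap
    QuotientAddGroup.isOpenQuotientMap_mk).isQuotientMap

theorem proj_add (x y : ℝ × ℝ) : proj (x + y) = proj x + proj y := rfl

theorem proj_sub (x y : ℝ × ℝ) : proj (x - y) = proj x - proj y := rfl

theorem exists_int_of_proj_eq {x y : ℝ × ℝ} (h : proj x = proj y) :
    ∃ v : ℤ × ℤ, y = x + ((v.1 : ℝ), (v.2 : ℝ)) := by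
  simp only [proj, Prod.mk.injEq, ← sub_eq_zero (a := (x.1 : AddCircle (1 : ℝ))),
    ← sub_eq_zero (a := (x.2 : AddCircle (1 : ℝ))), ← AddCircle.coe_sub,
    AddCircle.coe_eq_zero_iff, zsmul_eq_mul, mul_one] at h
  obtain ⟨⟨m, hm⟩, ⟨n, hn⟩⟩ := h
  exact ⟨(-m, -n), by ext <;> simp <;> linarith⟩

theorem Rrot_eq_add_proj (ρ : ℝ × ℝ) (z : T2) : Rrot ρ z = z + proj ρ := rfl

theorem TotallyIrrational.irrational_fst {ρ : ℝ × ℝ} (hρ : TotallyIrrational ρ) :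
    Irrational ρ.1 := by
  rintro ⟨q, hq⟩
  simpa using (hρ (-q) 1 0 (by simp [hq])).2.1

theorem dense_zmultiples_proj {ρ : ℝ × ℝ} (hρ : TotallyIrrational ρ) :
    Dense (AddSubgroup.zmultiples (proj ρ) : Set T2) := by
  set H := (AddSubgroup.zmultiples (proj ρ)).topologicalClosure
  have hH : IsClosed (H : Set T2) := AddSubgroup.isClosed_topologicalClosure _
  have hfst : Prod.fst '' (H : Set T2) = univ := by
    have hdense : DenseRange fun n : ℤ ↦ n • (ρ.1 : AddCircle (1 : ℝ)) :=
      AddCircle.denseRange_zsmul_coe_iff.2 (by simpa using hρ.irrational_fst)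
    have hrange : range (fun n : ℤ ↦ n • (ρ.1 : AddCircle (1 : ℝ))) ⊆ Prod.fst '' (H : Set T2) :=
      fun _ ⟨n, hn⟩ ↦ ⟨n • proj ρ, AddSubgroup.le_topologicalClosure _
        (AddSubgroup.zsmul_mem_zmultiples _ n), hn⟩
    exact eq_univ_of_univ_subset <| hdense.closure_eq ▸
      (hH.isCompact.image continuous_fst).isClosed.closure_subset_iff.2 hrange
  rcases AddCircle.eq_top_or_exists_nsmul_snd_eq_zsmul_fst hH hfst with hH_top | ⟨k, hk, m, hkm⟩
  · rw [← dense_closure, ← AddSubgroup.topologicalClosure_coe]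
    change Dense (H : Set T2)
    simp [hH_top]
  · have hrel := hkm (proj ρ) (AddSubgroup.le_topologicalClosure _ (AddSubgroup.mem_zmultiples _))
    obtain ⟨j, hj⟩ : ∃ j : ℤ, j • (1 : ℝ) = k * ρ.2 - m * ρ.1 := by
      rw [← AddCircle.coe_eq_zero_iff, AddCircle.coe_sub, ← nsmul_eq_mul, ← zsmul_eq_mul]
      exact sub_eq_zero.2 hrel
    rw [zsmul_eq_mul, mul_one] at hj
    have := (hρ j m (-k) (by push_cast; linear_combination hj)).2.2
    exact absurd (by exact_mod_cast neg_eq_zero.1 this) hk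

section MinimalHomeomorph

variable {X : Type*} [TopologicalSpace X]

theorem hIter_natCast (f : X ≃ₜ X) (n : ℕ) : hIter f n = (⇑f)^[n] := rfl

theorem hIter_mem_of_image_eq {f : X ≃ₜ X} {S : Set X} (hfS : f '' S = S) {z : X} (hz : z ∈ S) :
    ∀ n : ℤ, hIter f n z ∈ S := by
  have hf : MapsTo f S S := fun y hy ↦ hfS ▸ mem_image_of_mem f hy
  have hf_symm : MapsTo f.symm S S := fun y hy ↦ by
    obtain ⟨x, hx, rfl⟩ := hfS.symm ▸ hy
    simpa using hx
  rintro (n | n)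
  exacts [hf.iterate n hz, hf_symm.iterate (n + 1) hz]

theorem eq_univ_of_image_eq_of_dense_hIter {f : X ≃ₜ X}
    (hmin : ∀ z : X, Dense (range fun n : ℤ ↦ hIter f n z)) {S : Set X} (hS : IsClosed S)
    (hne : S.Nonempty) (hfS : f '' S = S) : S = univ := by
  obtain ⟨z, hz⟩ := hne
  exact eq_univ_of_univ_subset <| (hmin z).closure_eq ▸
    hS.closure_subset_iff.2 (range_subset_iff.2 (hIter_mem_of_image_eq hfS hz))

end MinimalHomeomorph

section SkewProduct

variable {X E : Type*}

def skewProduct [Add E] (f : X → X) (φ : X → E) (p : X × E) : X × E := (f p.1, p.2 + φ p.1)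

theorem iterate_skewProduct [AddCommMonoid E] (f : X → X) (φ : X → E) (n : ℕ) (x : X) (v : E) :
    (skewProduct f φ)^[n] (x, v) = (f^[n] x, v + birkhoffSum f φ n x) := by
  induction n with
  | zero => simp
  | succ n ih => simp [iterate_succ_apply', ih, skewProduct, birkhoffSum_succ, add_assoc]

variable [TopologicalSpace X] [T2Space X] [NormedAddCommGroup E] [NormedSpace ℝ E]

theorem eq_of_mem_of_minimal_skewProduct {f : X → X} {φ : X → E} {M : Set (X × E)}
    (hM : Minimal (fun M ↦ M.Nonempty ∧ IsCompact M ∧ MapsTo (skewProduct f φ) M M) M)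
    {x : X} {v w : E} (hv : (x, v) ∈ M) (hw : (x, w) ∈ M) : v = w := by
  obtain ⟨-, hM_compact, hM_inv⟩ := hM.prop
  set τ : X × E → X × E := fun p ↦ (p.1, p.2 + (w - v))
  have hτ : Continuous τ := by fun_prop
  -- `M ∩ τ '' M` is again compact and invariant, since `τ` commutes with the skew product.
  have hM_sub : M ⊆ τ '' M := by
    have hne : (M ∩ τ '' M).Nonempty := ⟨(x, w), hw, (x, v), hv, by simp [τ]⟩
    have hinv : MapsTo (skewProduct f φ) (M ∩ τ '' M) (M ∩ τ '' M) := by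
      rintro _ ⟨hp, q, hq, rfl⟩
      exact ⟨hM_inv hp, _, hM_inv hq, by simp [τ, skewProduct, add_right_comm]⟩
    have hM_eq := hM.eq_of_subset
      ⟨hne, hM_compact.inter_right (hM_compact.image hτ).isClosed, hinv⟩ inter_subset_left
    intro p hp
    rw [← hM_eq] at hp
    exact hp.2
  have hsub_mem : ∀ n : ℕ, (x, v + n • (v - w)) ∈ M := by
    intro n
    induction n with
    | zero => simpa using hv
    | succ n ih =>
      obtain ⟨⟨x', v'⟩, hq, hq_eq⟩ := hM_sub ih
      simp only [τ, Prod.mk.injEq] at hq_eq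
      obtain ⟨rfl, hv'⟩ := hq_eq
      convert hq using 2
      rw [succ_nsmul, eq_sub_of_add_eq hv']
      abel
  exact sub_eq_zero.1 <| eq_zero_of_forall_add_nsmul_mem
    (hM_compact.image continuous_snd).isBounded fun n ↦ ⟨_, hsub_mem n, rfl⟩

theorem exists_continuous_coboundary_of_bounded_birkhoffSum [CompactSpace X] [ProperSpace E]
    (f : X ≃ₜ X) (hmin : ∀ z : X, Dense (range fun n : ℤ ↦ hIter f n z)) {φ : X → E}
    (hφ : Continuous φ) {z₀ : X} {C : ℝ} (hC : ∀ n : ℕ, ‖birkhoffSum f φ n z₀‖ ≤ C) :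
    ∃ u : X → E, Continuous u ∧ ∀ x, u (f x) = u x + φ x := by
  set T := skewProduct f φ
  have hT : Continuous T := by unfold T skewProduct; fun_prop
  set K := closure (range fun n : ℕ ↦ T^[n] (z₀, 0))
  have hK_compact : IsCompact K := by
    refine (isCompact_univ.prod (isCompact_closedBall 0 C)).of_isClosed_subset isClosed_closure
      (closure_minimal ?_ (isClosed_univ.prod Metric.isClosed_closedBall))
    rintro _ ⟨n, rfl⟩
    simpa [T, iterate_skewProduct] using hC n
  have hK_inv : MapsTo T K K := by
    refine MapsTo.closure (fun _ ⟨n, hn⟩ ↦ ⟨n + 1, ?_⟩) hT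
    simp only [iterate_succ_apply', ← hn]
  obtain ⟨M, -, hM⟩ := hK_compact.exists_minimal_mapsTo ⟨_, subset_closure ⟨0, rfl⟩⟩ hK_inv
  obtain ⟨hM_ne, hM_compact, hM_inv⟩ := hM.prop
  have hTM : T '' M = M := hM.eq_of_subset ⟨hM_ne.image T, hM_compact.image hT,
    (mapsTo_image T M).mono_left hM_inv.image_subset⟩ hM_inv.image_subset
  have hM_fst : Prod.fst '' M = univ := by
    refine eq_univ_of_image_eq_of_dense_hIter hmin (hM_compact.image continuous_fst).isClosed
      (hM_ne.image _) ?_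
    conv_rhs => rw [← hTM]
    simp only [image_image]
    rfl
  have hM_graph : ∀ x, ∃! v, (x, v) ∈ M := fun x ↦ by
    obtain ⟨⟨x, v⟩, hv, rfl⟩ := hM_fst.symm ▸ mem_univ x
    exact ⟨v, hv, fun w hw ↦ eq_of_mem_of_minimal_skewProduct hM hw hv⟩
  obtain ⟨u, hu, huM⟩ := hM_compact.exists_continuous_graph_subset hM_graph
  exact ⟨u, hu, fun x ↦ (hM_graph (f x)).unique (huM (f x)) (hM_inv (huM x))⟩

end SkewProduct

namespace IsLift

variable {f : T2 → T2} {F : ℝ × ℝ → ℝ × ℝ}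

theorem proj_iterate (hF : IsLift f F) (n : ℕ) (x : ℝ × ℝ) :
    proj (F^[n] x) = f^[n] (proj x) :=
  Semiconj.iterate_right (f := proj) hF.1 n x

theorem sub_eq_of_proj_eq (hF : IsLift f F) {x y : ℝ × ℝ} (h : proj x = proj y) :
    F x - x = F y - y := by
  obtain ⟨v, rfl⟩ := exists_int_of_proj_eq h
  rw [hF.2]
  abel

theorem exists_continuous_displacement (hF : IsLift f F) (hF_cont : Continuous F) (ρ : ℝ × ℝ) :
    ∃ φ : T2 → ℝ × ℝ, Continuous φ ∧ ∀ x, φ (proj x) = F x - x - ρ := by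
  have hsurj := isQuotientMap_proj.surjective
  set φ : T2 → ℝ × ℝ := fun z ↦ F (surjInv hsurj z) - surjInv hsurj z - ρ
  have hφ : ∀ x, φ (proj x) = F x - x - ρ := fun x ↦ by
    simp only [φ, sub_left_inj]
    exact hF.sub_eq_of_proj_eq (surjInv_eq hsurj _)
  refine ⟨φ, isQuotientMap_proj.continuous_iff.2 ?_, hφ⟩
  rw [show φ ∘ proj = fun x ↦ F x - x - ρ from funext hφ]
  fun_prop

theorem birkhoffSum_displacement (hF : IsLift f F) {ρ : ℝ × ℝ} {φ : T2 → ℝ × ℝ}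
    (hφ : ∀ x, φ (proj x) = F x - x - ρ) (n : ℕ) (x : ℝ × ℝ) :
    birkhoffSum f φ n (proj x) = F^[n] x - x - (n : ℝ) • ρ := by
  induction n with
  | zero => simp
  | succ n ih =>
    rw [birkhoffSum_succ, ih, ← hF.proj_iterate, hφ, iterate_succ_apply', Nat.cast_succ,
      add_smul, one_smul]
    abel

end IsLift

theorem minimal_pseudo_rotation_semiconjugate_general
    (f : T2 ≃ₜ T2) (F : (ℝ × ℝ) ≃ₜ (ℝ × ℝ)) (hF : IsLift ⇑f ⇑F)
    (ρ : ℝ × ℝ)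
    (hbmm : BoundedMeanMotion F ρ)
    (hirr : TotallyIrrational ρ)
    (hmin : ∀ z : T2, Dense (Set.range fun n : ℤ => hIter f n z)) :
    ∃ h : T2 → T2, Continuous h ∧ Function.Surjective h ∧
      ∀ z : T2, h (f z) = Rrot ρ (h z) := by
  obtain ⟨C, hC⟩ := hbmm
  obtain ⟨φ, hφ, hφ_proj⟩ := hF.exists_continuous_displacement F.continuous ρ
  obtain ⟨u, hu, hu_coboundary⟩ := exists_continuous_coboundary_of_bounded_birkhoffSum f hmin hφ
    (z₀ := proj 0) fun n ↦ by
      simpa [hIter_natCast, hF.birkhoffSum_displacement hφ_proj] using hC 0 n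
  set h : T2 → T2 := fun z ↦ z - proj (u z)
  have hh : Continuous h := continuous_id.sub (isQuotientMap_proj.continuous.comp hu)
  have hsemiconj : ∀ z, h (f z) = Rrot ρ (h z) := by
    intro z
    obtain ⟨x, rfl⟩ := isQuotientMap_proj.surjective z
    simp only [h, Rrot_eq_add_proj]
    rw [hu_coboundary, ← hF.1 x, hφ_proj, proj_add, proj_sub, proj_sub]
    abel
  refine ⟨h, hh, range_eq_univ.1 <| eq_univ_of_vadd_eq_of_dense_zmultiples
    (dense_zmultiples_proj hirr) (isCompact_range hh).isClosed (range_nonempty h) ?_, hsemiconj⟩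
  calc (proj ρ + ·) '' range h = range (Rrot ρ ∘ h) := by
        rw [← range_comp]
        simp only [comp_def, Rrot_eq_add_proj, add_comm]
    _ = range (h ∘ f) := congr_arg range (funext hsemiconj).symm
    _ = range h := f.surjective.range_comp h

/-- **Jäger.**  A minimal pseudo-rotation of 𝕋² with bounded mean motion and totally
irrational rotation vector `ρ` is semiconjugate to the rigid rotation `R_ρ`. -/
theorem minimal_pseudo_rotation_semiconjugate
    (f : T2 ≃ₜ T2) (F : (ℝ × ℝ) ≃ₜ (ℝ × ℝ)) (hF : IsLift ⇑f ⇑F)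
    (ρ : ℝ × ℝ) (hρ : IsPseudoRotation ⇑F ρ)
    (hbmm : BoundedMeanMotion F ρ)
    (hirr : TotallyIrrational ρ)
    (hmin : ∀ z : T2, Dense (Set.range fun n : ℤ => hIter f n z)) :
    ∃ h : T2 → T2, Continuous h ∧ Function.Surjective h ∧
      ∀ z : T2, h (f z) = Rrot ρ (h z) :=
  minimal_pseudo_rotation_semiconjugate_general f F hF ρ hbmm hirr hmin
end
end

section
/- Let F : ℝ² → ℝ² be a homeomorphism with F(z+v) = F(z)+v for all v ∈ ℤ², let ρ = (ρ₁,ρ₂) ∈ ℝ², and suppose there is C > 0 such that |π₁(Fⁿ(z) − z) − nρ₁| ≤ C for all z ∈ ℝ² and all n ∈ ℤ, where π₁ is the first coordinate projection. Then the function H(z) = sup_{n∈ℤ} (π₁(Fⁿ(z)) − nρ₁) is finite for every z (indeed |H(z) − π₁(z)| ≤ C), and satisfies H(F(z)) = H(z) + ρ₁, H(z+(1,0)) = H(z) + 1, and H(z+(0,1)) = H(z) for all z ∈ ℝ². -/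
open Filter Topology Set Function

noncomputable section

/-! The supremum over the whole orbit turns the bounded cocycle `φ ∘ fⁿ - n a` into an exact
one: replacing `z` by `f z` shifts the orbit index by one, which changes each term by exactly `a`,
and a map commuting with `f` moves every term of the orbit by the same amount; both relations pass
to the supremum, which is finite because the deviations are bounded. -/

section Iterates

variable {X : Type*} [TopologicalSpace X] (f : X ≃ₜ X)

theorem hIter_eq_zpow (n : ℤ) : hIter f n = ⇑(f.toEquiv ^ n) := by
  cases n with
  | ofNat k =>
    show (⇑f)^[k] = _
    rw [Int.ofNat_eq_natCast, zpow_natCast, Equiv.Perm.coe_pow]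
    rfl
  | negSucc k =>
    show (⇑f.symm)^[k + 1] = _
    rw [zpow_negSucc, ← inv_pow, Equiv.Perm.coe_pow]
    rfl

@[simp]
theorem hIter_zero : hIter f 0 = id := rfl

theorem hIter_add_one_apply (n : ℤ) (z : X) : hIter f (n + 1) z = hIter f n (f z) := by
  rw [hIter_eq_zpow, hIter_eq_zpow, zpow_add_one, Equiv.Perm.coe_mul, comp_apply]
  rfl

end Iterates

theorem Function.Commute.hIter_left {X : Type*} [TopologicalSpace X] {f : X ≃ₜ X} {τ : X → X}
    (h : Function.Commute f τ) (n : ℤ) :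
    Function.Commute (hIter f n) τ := by
  cases n with
  | ofNat k => exact h.iterate_left k
  | negSucc k =>
    exact Function.Commute.iterate_left
      (Semiconj.inverse_left h f.symm_apply_apply f.apply_symm_apply) (k + 1)

-- The junk value `0` when the orbit terms are unbounded above.
def orbitSup {X : Type*} [TopologicalSpace X] (f : X ≃ₜ X) (φ : X → ℝ) (a : ℝ)
    (z : X) : ℝ :=
  ⨆ n : ℤ, (φ (hIter f n z) - n * a)

section OrbitSup

variable {X : Type*} [TopologicalSpace X] {f : X ≃ₜ X} {φ : X → ℝ} {a : ℝ} {z : X}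

theorem bddAbove_orbit_of_abs_sub_le {C : ℝ}
    (hbd : ∀ n : ℤ, |φ (hIter f n z) - φ z - n * a| ≤ C) :
    BddAbove (range fun n : ℤ => φ (hIter f n z) - n * a) := by
  refine ⟨φ z + C, ?_⟩
  rintro _ ⟨n, rfl⟩
  linarith [(abs_le.mp (hbd n)).2]

theorem abs_orbitSup_sub_le {C : ℝ} (hbd : ∀ n : ℤ, |φ (hIter f n z) - φ z - n * a| ≤ C) :
    |orbitSup f φ a z - φ z| ≤ C := by
  have hle : φ z ≤ orbitSup f φ a z := by
    simpa [orbitSup] using le_ciSup (bddAbove_orbit_of_abs_sub_le hbd) 0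
  have hge : orbitSup f φ a z ≤ φ z + C :=
    ciSup_le fun n => by linarith [(abs_le.mp (hbd n)).2]
  rw [abs_le]
  constructor <;> linarith

theorem orbitSup_apply_self (hbdd : BddAbove (range fun n : ℤ => φ (hIter f n z) - n * a)) :
    orbitSup f φ a (f z) = orbitSup f φ a z + a := by
  have hterm (n : ℤ) :
      φ (hIter f n (f z)) - n * a = φ (hIter f (n + 1) z) - ↑(n + 1) * a + a := by
    rw [hIter_add_one_apply]
    push_cast
    ring
  have hbdd_shift : BddAbove (range fun n : ℤ => φ (hIter f (n + 1) z) - ↑(n + 1) * a) :=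
    hbdd.mono <| by
      rintro _ ⟨n, rfl⟩
      exact ⟨n + 1, rfl⟩
  calc orbitSup f φ a (f z)
      = (⨆ n : ℤ, φ (hIter f (n + 1) z) - ↑(n + 1) * a) + a := by
        rw [ciSup_add hbdd_shift]
        exact iSup_congr hterm
    _ = orbitSup f φ a z + a :=
        congrArg (· + a) <|
          Equiv.iSup_comp (g := fun n : ℤ => φ (hIter f n z) - n * a) (Equiv.addRight 1)

theorem orbitSup_apply_of_commute {τ : X → X} {c : ℝ} (hτ : Function.Commute f τ)
    (hφ : ∀ x, φ (τ x) = φ x + c)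
    (hbdd : BddAbove (range fun n : ℤ => φ (hIter f n z) - n * a)) :
    orbitSup f φ a (τ z) = orbitSup f φ a z + c := by
  have hterm (n : ℤ) : φ (hIter f n (τ z)) - n * a = φ (hIter f n z) - n * a + c := by
    rw [(hτ.hIter_left n).eq, hφ]
    ring
  rw [orbitSup, orbitSup, ciSup_add hbdd]
  exact iSup_congr hterm

end OrbitSup

theorem sup_semiconjugacy_properties_general
    (F : (ℝ × ℝ) ≃ₜ (ℝ × ℝ))
    (hper : ∀ (z : ℝ × ℝ) (v : ℤ × ℤ),
      F (z + ((v.1 : ℝ), (v.2 : ℝ))) = F z + ((v.1 : ℝ), (v.2 : ℝ)))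
    (ρ : ℝ × ℝ) (C : ℝ)
    (hbd : ∀ (z : ℝ × ℝ) (n : ℤ), |(hIter F n z - z).1 - (n : ℝ) * ρ.1| ≤ C)
    (H : ℝ × ℝ → ℝ)
    (hH : ∀ z : ℝ × ℝ, H z = ⨆ n : ℤ, ((hIter F n z).1 - (n : ℝ) * ρ.1)) :
    (∀ z : ℝ × ℝ, |H z - z.1| ≤ C) ∧
    (∀ z : ℝ × ℝ, H (F z) = H z + ρ.1) ∧
    (∀ z : ℝ × ℝ, H (z + ((1 : ℝ), (0 : ℝ))) = H z + 1) ∧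
    (∀ z : ℝ × ℝ, H (z + ((0 : ℝ), (1 : ℝ))) = H z) := by
  obtain rfl : H = orbitSup F Prod.fst ρ.1 := funext hH
  have hdev (z : ℝ × ℝ) (n : ℤ) : |(hIter F n z).1 - z.1 - n * ρ.1| ≤ C := by
    simpa using hbd z n
  have hbdd (z : ℝ × ℝ) := bddAbove_orbit_of_abs_sub_le (hdev z)
  have htrans (v : ℤ × ℤ) : Function.Commute F (· + ((v.1 : ℝ), (v.2 : ℝ))) :=
    fun z => hper z v
  refine ⟨fun z => abs_orbitSup_sub_le (hdev z), fun z => orbitSup_apply_self (hbdd z),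
    fun z => ?_, fun z => ?_⟩
  · simpa using orbitSup_apply_of_commute (htrans (1, 0)) (c := 1) (fun _ => by simp) (hbdd z)
  · simpa using orbitSup_apply_of_commute (htrans (0, 1)) (c := 0) (fun _ => by simp) (hbdd z)

/-- If `F` commutes with integer translations and has uniformly bounded deviations
`|π₁(Fⁿ(z) − z) − nρ₁| ≤ C` for all `n ∈ ℤ`, then `H(z) = sup_{n∈ℤ} (π₁(Fⁿ(z)) − nρ₁)`
is finite (indeed `|H(z) − π₁(z)| ≤ C`) and satisfies `H(F(z)) = H(z) + ρ₁`,
`H(z+(1,0)) = H(z) + 1` and `H(z+(0,1)) = H(z)`. -/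
theorem sup_semiconjugacy_properties
    (F : (ℝ × ℝ) ≃ₜ (ℝ × ℝ))
    (hper : ∀ (z : ℝ × ℝ) (v : ℤ × ℤ),
      F (z + ((v.1 : ℝ), (v.2 : ℝ))) = F z + ((v.1 : ℝ), (v.2 : ℝ)))
    (ρ : ℝ × ℝ) (C : ℝ) (hC : 0 < C)
    (hbd : ∀ (z : ℝ × ℝ) (n : ℤ), |(hIter F n z - z).1 - (n : ℝ) * ρ.1| ≤ C)
    (H : ℝ × ℝ → ℝ)
    (hH : ∀ z : ℝ × ℝ, H z = ⨆ n : ℤ, ((hIter F n z).1 - (n : ℝ) * ρ.1)) :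
    (∀ z : ℝ × ℝ, |H z - z.1| ≤ C) ∧
    (∀ z : ℝ × ℝ, H (F z) = H z + ρ.1) ∧
    (∀ z : ℝ × ℝ, H (z + ((1 : ℝ), (0 : ℝ))) = H z + 1) ∧
    (∀ z : ℝ × ℝ, H (z + ((0 : ℝ), (1 : ℝ))) = H z) :=
  sup_semiconjugacy_properties_general F hper ρ C hbd H hH
end
end
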